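/- arXiv:1706.01648 — 3 statements merged into one kernel-verified Lean document; each statement's English description precedes it below -/
import Mathlib

section
/- For every integer s with s ≥ 13 and s ≠ 15 and s ≠ 16, there exists an integer d with 4d - 3 ≤ s < d² such that d² - s is not a perfect square (equivalently, √(d² - s) is irrational). -/
/-! Take `d = ⌊(s + 3) / 4⌋`. The constraints `s ≥ 13`, `s ≠ 15, 16` are exactly what makes
`4d - 3 ≤ s ≤ 6d - 10`, and for such `d` the integer `d² - s` lies strictly between the
consecutive squares `(d - 3)²` and `(d - 2)²`, so it is positive but not a square. -/

theorem Int.not_isSquare_of_sq_lt_of_lt_sq {k n : ℤ} (hlt : k ^ 2 < n) (hgt : n < (k + 1) ^ 2) :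
    ¬IsSquare n := by
  rintro ⟨m, rfl⟩
  rw [← sq, sq_lt_sq] at hlt hgt
  have := abs_add_le k 1
  rw [abs_one] at this
  omega

theorem sq_sub_three_lt_sq_sub_and_sq_sub_lt_sq_sub_two {R : Type*} [CommRing R] [LinearOrder R]
    [IsStrictOrderedRing R] {d s : R} (h₁ : 4 * d - 4 < s) (h₂ : s < 6 * d - 9) :
    (d - 3) ^ 2 < d ^ 2 - s ∧ d ^ 2 - s < (d - 2) ^ 2 := by
  constructor <;> nlinarith

theorem exists_four_mul_sub_three_le_and_le_six_mul_sub_ten {s : ℤ} (hs : 13 ≤ s) (h15 : s ≠ 15)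
    (h16 : s ≠ 16) : ∃ d : ℤ, 4 * d - 3 ≤ s ∧ s ≤ 6 * d - 10 :=
  ⟨(s + 3) / 4, by omega, by omega⟩

theorem stmt_2 (s : ℤ) (hs : 13 ≤ s) (h15 : s ≠ 15) (h16 : s ≠ 16) :
    ∃ d : ℤ, 4 * d - 3 ≤ s ∧ s < d ^ 2 ∧
      (¬∃ k : ℤ, d ^ 2 - s = k ^ 2) ∧ Irrational (Real.sqrt ((d : ℝ) ^ 2 - (s : ℝ))) := by
  obtain ⟨d, hd₁, hd₂⟩ := exists_four_mul_sub_three_le_and_le_six_mul_sub_ten hs h15 h16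
  obtain ⟨hlt, hgt⟩ :=
    sq_sub_three_lt_sq_sub_and_sq_sub_lt_sq_sub_two (d := d) (s := s) (by omega) (by omega)
  have hpos : 0 < d ^ 2 - s := (sq_nonneg _).trans_lt hlt
  have hns : ¬IsSquare (d ^ 2 - s) :=
    Int.not_isSquare_of_sq_lt_of_lt_sq hlt (by rwa [show d - 3 + 1 = d - 2 by ring])
  refine ⟨d, hd₁, by omega, fun ⟨k, hk⟩ => hns ⟨k, hk.trans (sq k)⟩, ?_⟩
  have hcast : (d : ℝ) ^ 2 - s = ((d ^ 2 - s : ℤ) : ℝ) := by push_cast; rfl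
  rwa [hcast, irrational_sqrt_intCast_iff_of_nonneg hpos.le]
end

section
/- Fix an integer s ≥ 2 and work in ℤ^{s+2} with coordinates (d, m, m₁, …, mₛ). A vector F = (d, m, m₁, …, mₛ) satisfies m ≥ m₁ ≥ ⋯ ≥ mₛ ≥ 0 and d ≥ m + m₁ + m₂ if and only if F is a nonnegative integer linear combination of the vectors H₀ = (1,0,0,…,0), H₁ = (1,1,0,…,0), H₂ = (2,1,1,0,…,0), and H_k = (3,1,1,…,1,0,…,0) with k−1 ones among the last s+1 coordinates, for k = 3, …, s+1. -/
/-- d-coefficient of the class `H_k`. -/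
def Hd (k : ℕ) : ℤ := if k = 0 then 1 else if k = 1 then 1 else if k = 2 then 2 else 3

/-- coefficient of `m` (the `E`-multiplicity) of `H_k`. -/
def Hm (k : ℕ) : ℤ := if k = 0 then 0 else 1

/-- coefficient of `m_j` (the `E_j`-multiplicity, `1 ≤ j ≤ s`) of `H_k`:
for `k ≥ 2`, `H_k` involves `E_1, …, E_{k-1}`. -/
def Hmi (k j : ℕ) : ℤ := if 1 ≤ j ∧ j + 1 ≤ k then 1 else 0

/-!
Writing `F = ∑ c_k H_k` and `T_j = c_j + c_{j+1} + ⋯ + c_{s+1}` for the tail sums of the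
coefficients, one reads off `m = T₁`, `m_j = T_{j+1}` and `d = T₀ + T₂ + T₃`. So `F` is a
combination with coefficients `c_k = T_k - T_{k+1}` precisely when the sequence
`(d - m₁ - m₂, m, m₁, …, mₛ, 0, 0, …)` is antitone, and that is the standard form.
-/

open Finset

def tailSum {n : ℕ} (c : Fin n → ℕ) (j : ℕ) : ℕ :=
  ∑ k ∈ univ.filter (fun k : Fin n => j ≤ k), c k

section tailSum

variable {n : ℕ} (c : Fin n → ℕ)

theorem antitone_tailSum : Antitone (tailSum c) := fun _ _ hab =>
  sum_le_sum_of_subset fun k hk => by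
    simp only [mem_filter, mem_univ, true_and] at hk ⊢
    omega

theorem tailSum_of_le {j : ℕ} (hj : n ≤ j) : tailSum c j = 0 :=
  sum_eq_zero fun k hk => by
    simp only [mem_filter, mem_univ, true_and] at hk
    omega

theorem tailSum_eq_add {j : ℕ} (hj : j < n) :
    tailSum c j = c ⟨j, hj⟩ + tailSum c (j + 1) := by
  have hsplit : univ.filter (fun k : Fin n => j ≤ k) =
      insert ⟨j, hj⟩ (univ.filter fun k : Fin n => j + 1 ≤ k) := by
    ext k
    simp only [mem_filter, mem_univ, true_and, mem_insert, Fin.ext_iff]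
    omega
  rw [tailSum, hsplit, sum_insert (by simp)]
  rfl

theorem sum_mul_Hd : ∑ k, (c k : ℤ) * Hd k = tailSum c 0 + tailSum c 2 + tailSum c 3 := by
  simp only [tailSum, sum_filter]
  push_cast
  rw [← sum_add_distrib, ← sum_add_distrib]
  refine sum_congr rfl fun k _ => ?_
  unfold Hd
  split_ifs <;> omega

theorem sum_mul_Hm : ∑ k, (c k : ℤ) * Hm k = tailSum c 1 := by
  simp only [tailSum, sum_filter]
  push_cast
  refine sum_congr rfl fun k _ => ?_
  unfold Hm
  split_ifs <;> omega

theorem sum_mul_Hmi (j : ℕ) : ∑ k, (c k : ℤ) * Hmi k (j + 1) = tailSum c (j + 2) := by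
  simp only [tailSum, sum_filter]
  push_cast
  refine sum_congr rfl fun k _ => ?_
  unfold Hmi
  split_ifs <;> omega

end tailSum

theorem exists_tailSum_eq_iff {n : ℕ} {g : ℕ → ℤ} :
    (∃ c : Fin n → ℕ, ∀ j, (tailSum c j : ℤ) = g j) ↔
      Antitone g ∧ ∀ j, n ≤ j → g j = 0 := by
  constructor
  · rintro ⟨c, hc⟩
    refine ⟨fun a b hab => ?_, fun j hj => ?_⟩
    · rw [← hc, ← hc]
      exact_mod_cast antitone_tailSum c hab
    · rw [← hc, tailSum_of_le c hj, Nat.cast_zero]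
  · rintro ⟨hanti, hzero⟩
    refine ⟨fun k => (g k - g (k + 1)).toNat, fun j => ?_⟩
    rcases le_or_gt n j with hj | hj
    · rw [tailSum_of_le _ hj, hzero j hj, Nat.cast_zero]
    refine Nat.decreasingInduction (motive := fun j _ => (tailSum _ j : ℤ) = g j)
      (fun j hj ih => ?_) ?_ hj.le
    · have hstep : g (j + 1) ≤ g j := hanti j.le_succ
      rw [tailSum_eq_add _ hj, Nat.cast_add, ih, Int.toNat_of_nonneg (by linarith)]
      ring
    · rw [tailSum_of_le _ le_rfl, hzero n le_rfl, Nat.cast_zero]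

section padZero

variable {α : Type*} [Zero α] {s : ℕ}

def padZero (f : Fin s → α) (j : ℕ) : α :=
  if h : j < s then f ⟨j, h⟩ else 0

@[simp]
theorem padZero_val (f : Fin s → α) (i : Fin s) : padZero f i = f i := by
  simp [padZero]

theorem padZero_of_le (f : Fin s → α) {j : ℕ} (hj : s ≤ j) : padZero f j = 0 := by
  simp [padZero, hj]

theorem eq_padZero_iff {f : Fin s → α} {u : ℕ → α} (hu : ∀ j, s ≤ j → u j = 0) :
    (∀ j, u j = padZero f j) ↔ ∀ i : Fin s, f i = u i := by
  refine ⟨fun h i => by rw [h, padZero_val], fun h j => ?_⟩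
  rcases lt_or_ge j s with hj | hj
  · rw [padZero, dif_pos hj, h ⟨j, hj⟩]
  · rw [hu j hj, padZero_of_le f hj]

theorem antitone_padZero_iff [Preorder α] {f : Fin s → α} :
    Antitone (padZero f) ↔ Antitone f ∧ ∀ i, 0 ≤ f i := by
  refine ⟨fun h => ⟨fun i j hij => ?_, fun i => ?_⟩, fun ⟨hanti, hnonneg⟩ a b hab => ?_⟩
  · simpa using h (Fin.le_iff_val_le_val.1 hij)
  · simpa [padZero_of_le f le_rfl] using h i.isLt.le
  · unfold padZero
    split_ifs with hb ha ha
    · exact hanti (Fin.mk_le_mk.2 hab)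
    · omega
    · exact hnonneg _
    · exact le_rfl

end padZero

def tailSeq {s : ℕ} (d m : ℤ) (mm : Fin s → ℤ) : ℕ → ℤ
  | 0 => d - padZero mm 0 - padZero mm 1
  | 1 => m
  | j + 2 => padZero mm j

theorem tailSeq_of_le {s : ℕ} (d m : ℤ) (mm : Fin s → ℤ) {j : ℕ} (hj : s + 2 ≤ j) :
    tailSeq d m mm j = 0 := by
  obtain ⟨j, rfl⟩ := Nat.exists_eq_add_of_le' (by omega : 2 ≤ j)
  exact padZero_of_le mm (by omega)

theorem antitone_tailSeq_iff {s : ℕ} (hs : 2 ≤ s) (d m : ℤ) (mm : Fin s → ℤ) :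
    Antitone (tailSeq d m mm) ↔
      (∀ i j : Fin s, i ≤ j → mm j ≤ mm i) ∧ (∀ i : Fin s, 0 ≤ mm i) ∧
        (∀ i : Fin s, mm i ≤ m) ∧
        d ≥ m + mm ⟨0, Nat.zero_lt_of_lt hs⟩ + mm ⟨1, hs⟩ := by
  have h0 : padZero mm 0 = mm ⟨0, Nat.zero_lt_of_lt hs⟩ :=
    padZero_val mm ⟨0, _⟩
  have h1 : padZero mm 1 = mm ⟨1, hs⟩ := padZero_val mm ⟨1, hs⟩
  constructor
  · intro h
    obtain ⟨hanti, hnonneg⟩ :=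
      antitone_padZero_iff.1 fun a b hab => h (by omega : a + 2 ≤ b + 2)
    refine ⟨fun i j hij => hanti hij, hnonneg, fun i => ?_, ?_⟩
    · simpa [tailSeq] using h (by omega : 1 ≤ i.val + 2)
    · have := h (Nat.zero_le 1)
      simp only [tailSeq, h0, h1] at this
      linarith
  · rintro ⟨hanti, hnonneg, hle, hd⟩
    have hpad := antitone_padZero_iff.2 ⟨fun i j hij => hanti i j hij, hnonneg⟩
    refine antitone_nat_of_succ_le fun j => ?_
    rcases j with _ | _ | j
    · simp only [tailSeq, h0, h1]
      linarith
    · simpa [tailSeq, h0] using hle _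
    · exact hpad j.le_succ

theorem tailSum_eq_tailSeq_iff {s : ℕ} (c : Fin (s + 2) → ℕ) (d m : ℤ)
    (mm : Fin s → ℤ) :
    (∀ j, (tailSum c j : ℤ) = tailSeq d m mm j) ↔
      d = ∑ k : Fin (s + 2), (c k : ℤ) * Hd k ∧
        m = ∑ k : Fin (s + 2), (c k : ℤ) * Hm k ∧
        ∀ j : Fin s, mm j = ∑ k : Fin (s + 2), (c k : ℤ) * Hmi k (j + 1) := by
  simp only [sum_mul_Hd, sum_mul_Hm, sum_mul_Hmi]
  have hmm : (∀ j, (tailSum c (j + 2) : ℤ) = padZero mm j) ↔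
      ∀ i : Fin s, mm i = tailSum c (i + 2) :=
    eq_padZero_iff fun j hj => by rw [tailSum_of_le c (by omega), Nat.cast_zero]
  constructor
  · intro h
    have h0 := h 0
    have h2 := h 2
    have h3 := h 3
    simp only [tailSeq] at h0 h2 h3
    exact ⟨by linarith, (h 1).symm, hmm.1 fun j => h (j + 2)⟩
  · rintro ⟨hd, hm, hmi⟩
    have htail := hmm.2 hmi
    rintro (_ | _ | j)
    · simp only [tailSeq, ← htail 0, ← htail 1]
      linarith
    · exact hm.symm
    · exact htail j

theorem stmt_10 (s : ℕ) (hs : 2 ≤ s) (d m : ℤ) (mm : Fin s → ℤ) :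
    ((∀ i j : Fin s, i ≤ j → mm j ≤ mm i) ∧ (∀ i : Fin s, 0 ≤ mm i) ∧
      (∀ i : Fin s, mm i ≤ m) ∧
      d ≥ m + mm ⟨0, by omega⟩ + mm ⟨1, by omega⟩) ↔
    ∃ c : Fin (s + 2) → ℕ,
      d = ∑ k : Fin (s + 2), (c k : ℤ) * Hd k ∧
      m = ∑ k : Fin (s + 2), (c k : ℤ) * Hm k ∧
      ∀ j : Fin s, mm j = ∑ k : Fin (s + 2), (c k : ℤ) * Hmi k (j + 1) := by
  calc _ ↔ Antitone (tailSeq d m mm) := (antitone_tailSeq_iff hs d m mm).symm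
    _ ↔ Antitone (tailSeq d m mm) ∧ ∀ j, s + 2 ≤ j → tailSeq d m mm j = 0 :=
      (and_iff_left fun _ => tailSeq_of_le d m mm).symm
    _ ↔ ∃ c : Fin (s + 2) → ℕ, ∀ j, (tailSum c j : ℤ) = tailSeq d m mm j :=
      exists_tailSum_eq_iff.symm
    _ ↔ _ := exists_congr fun c => tailSum_eq_tailSeq_iff c d m mm
end

section
/- Let s ≥ 2. Let a, b, b₁, …, bₛ be integers with a ≥ 0, b ≥ 0, bᵢ ≥ 0 for all i, a² + 1 = b² + b₁² + ⋯ + bₛ² and b + b₁ + ⋯ + bₛ = 3a − 1. Let d, m, m₁, …, mₛ be real numbers with m ≥ m₁ ≥ ⋯ ≥ mₛ ≥ 0 and d ≥ m + m₁ + m₂. Then da − mb − m₁b₁ − ⋯ − mₛbₛ ≥ 0. -/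
/-! Use only `b ≤ a`, `b₁ ≤ a` (from `a² + 1 = b² + Σ bᵢ²`), and bound the remaining weights by `m₂`.
With `t = b₂ + ⋯ + bₛ = 3a − 1 − b − b₁` the pairing is then at least
`d·a − m·b − m₁·b₁ − m₂·t = (d − m − m₁ − m₂)·a + (m − m₂)(a − b) + (m₁ − m₂)(a − b₁) + m₂ ≥ 0`. -/

theorem Int.le_of_sq_le_sq_add_one {x y : ℤ} (hy : 0 < y) (h : x ^ 2 ≤ y ^ 2 + 1) : x ≤ y := by
  by_contra! hxy
  nlinarith

theorem Finset.sum_mul_le_mul_sum_of_le {ι R : Type*} [Semiring R] [PartialOrder R]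
    [IsOrderedRing R] (s : Finset ι) {w x : ι → R} {c : R} (hw : ∀ i ∈ s, w i ≤ c)
    (hx : ∀ i ∈ s, 0 ≤ x i) : ∑ i ∈ s, w i * x i ≤ c * ∑ i ∈ s, x i := by
  rw [Finset.mul_sum]
  exact Finset.sum_le_sum fun i hi => mul_le_mul_of_nonneg_right (hw i hi) (hx i hi)

theorem pairing_nonneg_of_le_of_add_eq {a b b₁ t d m m₁ m₂ : ℝ} (ha : 0 ≤ a) (hb : b ≤ a)
    (hb₁ : b₁ ≤ a) (ht : b + b₁ + t = 3 * a - 1) (hm₂ : 0 ≤ m₂) (hm₂m₁ : m₂ ≤ m₁) (hm₂m : m₂ ≤ m)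
    (hd : m + m₁ + m₂ ≤ d) : 0 ≤ d * a - m * b - m₁ * b₁ - m₂ * t := by
  have hsplit : d * a - m * b - m₁ * b₁ - m₂ * t
      = (d - m - m₁ - m₂) * a + (m - m₂) * (a - b) + (m₁ - m₂) * (a - b₁) + m₂ := by
    obtain rfl : t = 3 * a - 1 - b - b₁ := by linarith
    ring
  rw [hsplit]
  have h₀ : 0 ≤ (d - m - m₁ - m₂) * a := mul_nonneg (by linarith) ha
  have h₁ : 0 ≤ (m - m₂) * (a - b) := mul_nonneg (by linarith) (by linarith)
  have h₂ : 0 ≤ (m₁ - m₂) * (a - b₁) := mul_nonneg (by linarith) (by linarith)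
  linarith

theorem stmt_14 (s : ℕ) (hs : 2 ≤ s) (a b : ℤ) (bb : Fin s → ℤ)
    (hb : 0 ≤ b) (hbb : ∀ i, 0 ≤ bb i)
    (h1 : a ^ 2 + 1 = b ^ 2 + ∑ i, (bb i) ^ 2)
    (h2 : b + ∑ i, bb i = 3 * a - 1)
    (d m : ℝ) (mm : Fin s → ℝ)
    (hmono : ∀ i j : Fin s, i ≤ j → mm j ≤ mm i)
    (hnonneg : ∀ i, 0 ≤ mm i)
    (hm : ∀ i, mm i ≤ m)
    (hd : d ≥ m + mm ⟨0, by omega⟩ + mm ⟨1, by omega⟩) :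
    d * (a : ℝ) - m * (b : ℝ) - ∑ i, mm i * (bb i : ℝ) ≥ 0 := by
  obtain ⟨k, rfl⟩ : ∃ k, s = k + 2 := ⟨s - 2, by omega⟩
  have hd : m + mm 0 + mm 1 ≤ d := hd
  have hsum_nonneg : 0 ≤ ∑ i, bb i := Finset.sum_nonneg fun i _ => hbb i
  have ha : 0 < a := by omega
  have hba : b ≤ a := Int.le_of_sq_le_sq_add_one ha <| by
    have := Finset.sum_nonneg fun i (_ : i ∈ Finset.univ) => sq_nonneg (bb i)
    linarith
  have hb₀a : bb 0 ≤ a := Int.le_of_sq_le_sq_add_one ha <| by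
    have := Finset.single_le_sum (fun i _ => sq_nonneg (bb i)) (Finset.mem_univ 0)
    nlinarith [sq_nonneg b]
  rw [Fin.sum_univ_succ] at h2 ⊢
  have htail : ∑ i : Fin (k + 1), mm i.succ * (bb i.succ : ℝ)
      ≤ mm 1 * ∑ i : Fin (k + 1), (bb i.succ : ℝ) :=
    Finset.sum_mul_le_mul_sum_of_le _
      (fun i _ => hmono 1 i.succ (Fin.one_le_of_ne_zero i.succ_ne_zero))
      (fun i _ => by exact_mod_cast hbb i.succ)
  have hsum : (b : ℝ) + bb 0 + ∑ i : Fin (k + 1), (bb i.succ : ℝ) = 3 * a - 1 := by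
    exact_mod_cast (by omega : b + bb 0 + ∑ i : Fin (k + 1), bb i.succ = 3 * a - 1)
  have key := pairing_nonneg_of_le_of_add_eq (by exact_mod_cast ha.le) (by exact_mod_cast hba)
    (by exact_mod_cast hb₀a) hsum (hnonneg 1) (hmono 0 1 zero_le_one) (hm 1) hd
  linarith
end
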